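/- The set {(g(z³), z, f₁(z³)/z², f₂(z³)/z²) : g(0)≠0, f₁(0)=f₂(0)=0, f₁'(0)≠0, f₂'(0)≠0} is a subgroup of the Triple Riordan group: it is closed under the 3-Riordan product and contains inverses, with inverse ((g(z³),z,f₁(z³)/z²,f₂(z³)/z²))^{-1} again of this form. -/

import Mathlib

open PowerSeries

variable {K : Type*} [Field K]

/-- Composition (substitution) of formal power series: `pcomp A f = A ∘ f`,
intended for `f` with zero constant term, where `coeff n (f ^ k) = 0` for `k > n`. -/
noncomputable def pcomp (A f : PowerSeries K) : PowerSeries K :=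
  PowerSeries.mk fun n => ∑ k ∈ Finset.range (n + 1), coeff k A * coeff n (f ^ k)

/-- A formal power series is even if all its odd coefficients vanish. -/
def IsEvenPS (g : PowerSeries K) : Prop := ∀ n : ℕ, Odd n → coeff n g = 0

/-- A formal power series is odd if all its even coefficients vanish. -/
def IsOddPS (f : PowerSeries K) : Prop := ∀ n : ℕ, Even n → coeff n f = 0

lemma coeff_pcomp (A f : PowerSeries K) (n : ℕ) :
    coeff n (pcomp A f) = ∑ k ∈ Finset.range (n + 1), coeff k A * coeff n (f ^ k) := by
  simp [pcomp]

lemma coeff_pow_eq_zero {f : PowerSeries K} (hf : constantCoeff f = 0)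
    {n k : ℕ} (h : n < k) : coeff n (f ^ k) = 0 := by
  obtain ⟨r, rfl⟩ := X_dvd_iff.mpr hf
  rw [mul_pow, mul_comm, coeff_mul_X_pow', if_neg (by omega)]

lemma coeff_pcomp_ext {f : PowerSeries K} (hf : constantCoeff f = 0)
    (A : PowerSeries K) {m N : ℕ} (h : m < N) :
    coeff m (pcomp A f) = ∑ k ∈ Finset.range N, coeff k A * coeff m (f ^ k) := by
  rw [coeff_pcomp]
  apply Finset.sum_subset
  · intro x hx; rw [Finset.mem_range] at *; omega
  · intro x hx hnx
    rw [Finset.mem_range] at hx hnx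
    rw [coeff_pow_eq_zero hf (by omega), mul_zero]

lemma pcomp_one (f : PowerSeries K) : pcomp 1 f = 1 := by
  ext n
  rw [coeff_pcomp]
  rw [Finset.sum_eq_single 0]
  · simp
  · intro k hk hk0
    rw [coeff_one, if_neg hk0, zero_mul]
  · simp

lemma constantCoeff_pcomp (A f : PowerSeries K) :
    constantCoeff (pcomp A f) = constantCoeff A := by
  rw [← coeff_zero_eq_constantCoeff, coeff_pcomp]
  simp

lemma pcomp_X {f : PowerSeries K} (hf : constantCoeff f = 0) :
    pcomp X f = f := by
  ext n
  rw [coeff_pcomp]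
  rcases n with _ | n
  · simp [coeff_zero_eq_constantCoeff, hf]
  · rw [Finset.sum_eq_single 1]
    · simp
    · intro k hk hk1
      rw [coeff_X, if_neg hk1, zero_mul]
    · intro h
      exact absurd (Finset.mem_range.mpr (by omega)) h

lemma pcomp_X_right (A : PowerSeries K) : pcomp A X = A := by
  ext n
  rw [coeff_pcomp, Finset.sum_eq_single n]
  · simp
  · intro k hk hkn
    rw [coeff_X_pow, if_neg (Ne.symm hkn), mul_zero]
  · intro h; simp at h

lemma pcomp_mul {f : PowerSeries K} (hf : constantCoeff f = 0)
    (A B : PowerSeries K) : pcomp (A * B) f = pcomp A f * pcomp B f := by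
  ext n
  rw [coeff_pcomp, coeff_mul]
  have hR : ∀ p ∈ Finset.HasAntidiagonal.antidiagonal n,
      coeff p.1 (pcomp A f) * coeff p.2 (pcomp B f) =
      ∑ i ∈ Finset.range (n+1), ∑ j ∈ Finset.range (n+1),
        coeff i A * coeff j B * (coeff p.1 (f ^ i) * coeff p.2 (f ^ j)) := by
    intro p hp
    rw [Finset.HasAntidiagonal.mem_antidiagonal] at hp
    rw [coeff_pcomp_ext hf A (show p.1 < n+1 by omega), coeff_pcomp_ext hf B (show p.2 < n+1 by omega),
      Finset.sum_mul_sum]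
    apply Finset.sum_congr rfl; intro i _
    apply Finset.sum_congr rfl; intro j _
    ring
  rw [Finset.sum_congr rfl hR, Finset.sum_comm]
  have : ∀ i ∈ Finset.range (n+1),
      ∑ p ∈ Finset.HasAntidiagonal.antidiagonal n, ∑ j ∈ Finset.range (n+1),
        coeff i A * coeff j B * (coeff p.1 (f ^ i) * coeff p.2 (f ^ j)) =
      ∑ j ∈ Finset.range (n+1), coeff i A * coeff j B * coeff n (f ^ (i+j)) := by
    intro i _
    rw [Finset.sum_comm]
    apply Finset.sum_congr rfl; intro j _
    rw [← Finset.mul_sum, pow_add, coeff_mul]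
  rw [Finset.sum_congr rfl this]
  -- LHS: ∑_{m ≤ n} (∑_{p ∈ antidiagonal m} a_{p.1} b_{p.2}) * coeff n f^m
  have hL : ∀ m ∈ Finset.range (n+1),
      coeff m (A * B) * coeff n (f ^ m) =
      ∑ p ∈ Finset.HasAntidiagonal.antidiagonal m, coeff p.1 A * coeff p.2 B * coeff n (f ^ (p.1 + p.2)) := by
    intro m hm
    rw [coeff_mul, Finset.sum_mul]
    apply Finset.sum_congr rfl; intro p hp
    rw [Finset.HasAntidiagonal.mem_antidiagonal] at hp
    rw [hp]
  rw [Finset.sum_congr rfl hL]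
  rw [show Finset.range (n+1) = Finset.range (n+1) from rfl]
  have hbi : (Finset.range (n+1)).biUnion (fun m => Finset.HasAntidiagonal.antidiagonal m)
      = (Finset.range (n+1) ×ˢ Finset.range (n+1)).filter (fun p => p.1 + p.2 ≤ n) := by
    ext p
    simp only [Finset.mem_biUnion, Finset.HasAntidiagonal.mem_antidiagonal, Finset.mem_filter,
      Finset.mem_product, Finset.mem_range, Nat.lt_succ_iff]
    constructor
    · rintro ⟨m, hm, rfl⟩; omega
    · intro h; exact ⟨p.1 + p.2, by omega, rfl⟩
  have hdisj : (↑(Finset.range (n+1)) : Set ℕ).PairwiseDisjoint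
      (fun m => (Finset.HasAntidiagonal.antidiagonal m : Finset (ℕ × ℕ))) := by
    intro a _ b _ hab
    apply Finset.disjoint_left.mpr
    intro p hp hq
    rw [Finset.HasAntidiagonal.mem_antidiagonal] at hp hq
    exact hab (hp ▸ hq)
  rw [← Finset.sum_biUnion hdisj, hbi,
    Finset.sum_filter_of_ne (fun p _ hne => by
      by_contra hgt
      exact hne (by rw [coeff_pow_eq_zero hf (by omega), mul_zero])),
    Finset.sum_product]

lemma pcomp_pow {f : PowerSeries K} (hf : constantCoeff f = 0)
    (A : PowerSeries K) (k : ℕ) : pcomp (A ^ k) f = (pcomp A f) ^ k := by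
  induction k with
  | zero => simpa using pcomp_one f
  | succ k ih => rw [pow_succ, pow_succ, pcomp_mul hf, ih]

lemma pcomp_assoc {f g : PowerSeries K} (hf : constantCoeff f = 0)
    (hg : constantCoeff g = 0) (A : PowerSeries K) :
    pcomp (pcomp A f) g = pcomp A (pcomp f g) := by
  ext n
  rw [coeff_pcomp, coeff_pcomp]
  have hL : ∀ k ∈ Finset.range (n+1),
      coeff k (pcomp A f) * coeff n (g ^ k) =
      ∑ m ∈ Finset.range (n+1), coeff m A * coeff k (f ^ m) * coeff n (g ^ k) := by
    intro k hk
    rw [Finset.mem_range] at hk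
    rw [coeff_pcomp_ext hf A (show k < n+1 by omega), Finset.sum_mul]
  rw [Finset.sum_congr rfl hL, Finset.sum_comm]
  apply Finset.sum_congr rfl
  intro m _
  rw [← pcomp_pow hg, coeff_pcomp, Finset.mul_sum]
  apply Finset.sum_congr rfl
  intro k _
  ring

lemma coeff_one_pcomp {f : PowerSeries K} (hf : constantCoeff f = 0)
    (A : PowerSeries K) : coeff 1 (pcomp A f) = coeff 1 A * coeff 1 f := by
  rw [coeff_pcomp, Finset.sum_range_succ, Finset.sum_range_one]
  simp

lemma coeff_pow_self {f : PowerSeries K} (hf : constantCoeff f = 0)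
    (n : ℕ) : coeff n (f ^ n) = (coeff 1 f) ^ n := by
  induction n with
  | zero => simp
  | succ n ih =>
    rw [pow_succ, mul_comm, coeff_mul, Finset.sum_eq_single (1, n)]
    · rw [ih, pow_succ]; ring
    · rintro ⟨i, j⟩ hp hne
      rw [Finset.HasAntidiagonal.mem_antidiagonal] at hp
      rcases Nat.lt_trichotomy j n with hj | rfl | hj
      · rw [coeff_pow_eq_zero hf hj, mul_zero]
      · have hi : i = 1 := by omega
        exact absurd (by rw [hi]) hne
      · have : i = 0 := by omega
        subst this
        simp [coeff_zero_eq_constantCoeff, hf]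
    · intro h; exact absurd (Finset.HasAntidiagonal.mem_antidiagonal.mpr (by omega)) h

lemma pcomp_right_inj {f : PowerSeries K} (hf : constantCoeff f = 0)
    (h1 : coeff 1 f ≠ 0) {A B : PowerSeries K}
    (h : pcomp A f = pcomp B f) : A = B := by
  ext n
  induction n using Nat.strong_induction_on with
  | _ n ih =>
    have hc := congrArg (coeff n) h
    have hsum : ∑ k ∈ Finset.range n, coeff k A * coeff n (f ^ k) =
        ∑ k ∈ Finset.range n, coeff k B * coeff n (f ^ k) :=
      Finset.sum_congr rfl fun k hk => by rw [ih k (Finset.mem_range.mp hk)]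
    rw [coeff_pcomp, coeff_pcomp, Finset.sum_range_succ, Finset.sum_range_succ,
      hsum] at hc
    have := add_left_cancel hc
    rw [coeff_pow_self hf] at this
    exact mul_right_cancel₀ (pow_ne_zero n h1) this

lemma coeff_three_mul_pcomp (A : PowerSeries K) (n : ℕ) :
    coeff (3 * n) (pcomp A (X ^ 3)) = coeff n A := by
  rw [coeff_pcomp, Finset.sum_eq_single n]
  · rw [← pow_mul, coeff_X_pow, if_pos rfl, mul_one]
  · intro k hk hkn
    rw [← pow_mul, coeff_X_pow, if_neg (by omega), mul_zero]
  · intro h; exact absurd (Finset.mem_range.mpr (by omega)) h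

lemma pcomp_X3_inj {A B : PowerSeries K}
    (h : pcomp A (X ^ 3) = pcomp B (X ^ 3)) : A = B := by
  ext n
  rw [← coeff_three_mul_pcomp A n, ← coeff_three_mul_pcomp B n, h]

noncomputable def invC (ψ : PowerSeries K) : ℕ → K
  | 0 => 0
  | (n+1) =>
    ((if n = 0 then 1 else 0) - ∑ k ∈ (Finset.range (n+1)).attach,
        invC ψ k * coeff (n+1) (ψ ^ (k : ℕ))) * ((coeff 1 ψ) ^ (n+1))⁻¹
  decreasing_by exact Finset.mem_range.mp k.2

lemma pcomp_invC {ψ : PowerSeries K} (hψ : constantCoeff ψ = 0)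
    (h1 : coeff 1 ψ ≠ 0) :
    pcomp (PowerSeries.mk (invC ψ)) ψ = X := by
  ext n
  rw [coeff_pcomp]
  rcases n with _ | n
  · simp [invC]
  · rw [Finset.sum_range_succ, coeff_pow_self hψ]
    have hrec : invC ψ (n+1) =
        ((if n = 0 then 1 else 0) - ∑ k ∈ Finset.range (n+1),
          invC ψ k * coeff (n+1) (ψ ^ k)) * ((coeff 1 ψ) ^ (n+1))⁻¹ := by
      rw [invC]
      congr 1
      rw [← Finset.sum_attach (Finset.range (n+1)) (fun k => invC ψ k * coeff (n+1) (ψ ^ k))]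
    simp only [coeff_mk]
    rw [hrec, mul_assoc, inv_mul_cancel₀ (pow_ne_zero _ h1), mul_one]
    rw [coeff_X]
    rcases n with _ | n <;> simp

lemma exists_pcomp_inv {ψ : PowerSeries K} (hψ : constantCoeff ψ = 0)
    (h1 : coeff 1 ψ ≠ 0) :
    ∃ χ : PowerSeries K, constantCoeff χ = 0 ∧ coeff 1 χ ≠ 0 ∧
      pcomp χ ψ = X ∧ pcomp ψ χ = X := by
  refine ⟨PowerSeries.mk (invC ψ), ?_, ?_, pcomp_invC hψ h1, ?_⟩
  · simp [coeff_zero_eq_constantCoeff.symm, invC]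
  · intro hz
    have := coeff_one_pcomp hψ (PowerSeries.mk (invC ψ))
    rw [pcomp_invC hψ h1, hz, zero_mul] at this
    simpa using this
  · set χ := PowerSeries.mk (invC ψ) with hχdef
    have hχ0 : constantCoeff χ = 0 := by simp [hχdef, coeff_zero_eq_constantCoeff.symm, invC]
    have hkey : pcomp (pcomp ψ χ) ψ = pcomp X ψ := by
      rw [pcomp_assoc hχ0 hψ, pcomp_invC hψ h1, pcomp_X_right, pcomp_X hψ]
    exact pcomp_right_inj hψ h1 hkey

lemma hX3 : constantCoeff ((X : PowerSeries K) ^ 3) = 0 := by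
  rw [map_pow, constantCoeff_X]; ring

lemma pcomp_X_mul_X3 (p : PowerSeries K) :
    pcomp (X * p) (X ^ 3) = X ^ 3 * pcomp p (X ^ 3) := by
  rw [pcomp_mul hX3, pcomp_X hX3]

lemma decomp' {b : PowerSeries K} (p : PowerSeries K)
    (hb : X ^ 2 * b = pcomp (X * p) (X ^ 3)) : b = X * pcomp p (X ^ 3) := by
  apply mul_left_cancel₀ (pow_ne_zero 2 (X_ne_zero : (X : PowerSeries K) ≠ 0))
  rw [hb, pcomp_X_mul_X3]; ring

lemma h3_eq {b₁ b₂ p q h : PowerSeries K}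
    (hb₁ : b₁ = X * pcomp p (X ^ 3)) (hb₂ : b₂ = X * pcomp q (X ^ 3))
    (hcube : h ^ 3 = X * b₁ * b₂) :
    h ^ 3 = pcomp (X * (p * q)) (X ^ 3) := by
  rw [hcube, hb₁, hb₂, pcomp_mul hX3, pcomp_mul hX3, pcomp_X hX3]; ring

lemma pcomp_X3_left {h : PowerSeries K} (hh : constantCoeff h = 0) :
    pcomp (X ^ 3) h = h ^ 3 := by
  rw [pcomp_pow hh, pcomp_X hh]

lemma gkey {h ψ : PowerSeries K} (hh : constantCoeff h = 0)
    (hψ0 : constantCoeff ψ = 0) (h3 : h ^ 3 = pcomp ψ (X ^ 3))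
    (G : PowerSeries K) :
    pcomp (pcomp G (X ^ 3)) h = pcomp (pcomp G ψ) (X ^ 3) := by
  rw [pcomp_assoc hX3 hh G, pcomp_X3_left hh, h3, ← pcomp_assoc hψ0 hX3]

lemma bkey {h ψ : PowerSeries K} (hh : constantCoeff h = 0)
    (hψ0 : constantCoeff ψ = 0) (h3 : h ^ 3 = pcomp ψ (X ^ 3))
    (p : PowerSeries K) :
    pcomp (X * pcomp p (X ^ 3)) h = h * pcomp (pcomp p ψ) (X ^ 3) := by
  rw [pcomp_mul hh, pcomp_X hh, gkey hh hψ0 h3]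

lemma coeff_one_X_mul (p : PowerSeries K) :
    coeff 1 (X * p) = constantCoeff p := by
  rw [show (1:ℕ) = 0 + 1 from rfl, coeff_succ_X_mul, coeff_zero_eq_constantCoeff]

/-- The set {(g(z³), z, f₁(z³)/z², f₂(z³)/z²)} is a subgroup of the Triple
Riordan group: it is closed under the 3-Riordan product (first conjunct) and
contains inverses, the inverse being again of this form and giving the identity
(1, z, z, z) when multiplied on either side (second conjunct). All products are
computed via a cube root h of the product of the three multipliers, with
quotient witnesses. -/
theorem stmt17 :
    (∀ g f₁ f₂ G F₁ F₂ b₁ b₂ B₁ B₂ h u v₁ v₂ : PowerSeries K,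
      constantCoeff g ≠ 0 →
      constantCoeff f₁ = 0 → coeff 1 f₁ ≠ 0 →
      constantCoeff f₂ = 0 → coeff 1 f₂ ≠ 0 →
      constantCoeff G ≠ 0 →
      constantCoeff F₁ = 0 → coeff 1 F₁ ≠ 0 →
      constantCoeff F₂ = 0 → coeff 1 F₂ ≠ 0 →
      X ^ 2 * b₁ = pcomp f₁ (X ^ 3) → X ^ 2 * b₂ = pcomp f₂ (X ^ 3) →
      X ^ 2 * B₁ = pcomp F₁ (X ^ 3) → X ^ 2 * B₂ = pcomp F₂ (X ^ 3) →
      constantCoeff h = 0 → coeff 1 h ≠ 0 → h ^ 3 = X * b₁ * b₂ →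
      u * h = X → v₁ * h = b₁ → v₂ * h = b₂ →
      ∃ g'' f₁'' f₂'' : PowerSeries K,
        constantCoeff g'' ≠ 0 ∧
        constantCoeff f₁'' = 0 ∧ coeff 1 f₁'' ≠ 0 ∧
        constantCoeff f₂'' = 0 ∧ coeff 1 f₂'' ≠ 0 ∧
        pcomp g (X ^ 3) * pcomp (pcomp G (X ^ 3)) h = pcomp g'' (X ^ 3) ∧
        u * pcomp X h = X ∧
        X ^ 2 * (v₁ * pcomp B₁ h) = pcomp f₁'' (X ^ 3) ∧
        X ^ 2 * (v₂ * pcomp B₂ h) = pcomp f₂'' (X ^ 3)) ∧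
    (∀ g f₁ f₂ : PowerSeries K,
      constantCoeff g ≠ 0 →
      constantCoeff f₁ = 0 → coeff 1 f₁ ≠ 0 →
      constantCoeff f₂ = 0 → coeff 1 f₂ ≠ 0 →
      ∃ g' f₁' f₂' : PowerSeries K,
        constantCoeff g' ≠ 0 ∧
        constantCoeff f₁' = 0 ∧ coeff 1 f₁' ≠ 0 ∧
        constantCoeff f₂' = 0 ∧ coeff 1 f₂' ≠ 0 ∧
        (∀ b₁ b₂ b₁' b₂' h u v₁ v₂ : PowerSeries K,
          X ^ 2 * b₁ = pcomp f₁ (X ^ 3) → X ^ 2 * b₂ = pcomp f₂ (X ^ 3) →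
          X ^ 2 * b₁' = pcomp f₁' (X ^ 3) → X ^ 2 * b₂' = pcomp f₂' (X ^ 3) →
          constantCoeff h = 0 → coeff 1 h ≠ 0 → h ^ 3 = X * b₁ * b₂ →
          u * h = X → v₁ * h = b₁ → v₂ * h = b₂ →
          pcomp g (X ^ 3) * pcomp (pcomp g' (X ^ 3)) h = 1 ∧
          u * pcomp X h = X ∧
          v₁ * pcomp b₁' h = X ∧
          v₂ * pcomp b₂' h = X) ∧
        (∀ b₁ b₂ b₁' b₂' h u v₁ v₂ : PowerSeries K,
          X ^ 2 * b₁ = pcomp f₁ (X ^ 3) → X ^ 2 * b₂ = pcomp f₂ (X ^ 3) →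
          X ^ 2 * b₁' = pcomp f₁' (X ^ 3) → X ^ 2 * b₂' = pcomp f₂' (X ^ 3) →
          constantCoeff h = 0 → coeff 1 h ≠ 0 → h ^ 3 = X * b₁' * b₂' →
          u * h = X → v₁ * h = b₁' → v₂ * h = b₂' →
          pcomp g' (X ^ 3) * pcomp (pcomp g (X ^ 3)) h = 1 ∧
          u * pcomp X h = X ∧
          v₁ * pcomp b₁ h = X ∧
          v₂ * pcomp b₂ h = X)) := by
  constructor
  · -- closure under product
    intro g f₁ f₂ G F₁ F₂ b₁ b₂ B₁ B₂ h u v₁ v₂ hg hf₁0 hf₁1 hf₂0 hf₂1 hG hF₁0 hF₁1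
      hF₂0 hF₂1 hb₁ hb₂ hB₁ hB₂ hh0 hh1 hcube hu hv₁ hv₂
    obtain ⟨p, rfl⟩ := X_dvd_iff.mpr hf₁0
    obtain ⟨q, rfl⟩ := X_dvd_iff.mpr hf₂0
    obtain ⟨P, rfl⟩ := X_dvd_iff.mpr hF₁0
    obtain ⟨Q, rfl⟩ := X_dvd_iff.mpr hF₂0
    rw [coeff_one_X_mul] at hf₁1 hf₂1 hF₁1 hF₂1
    have b₁eq := decomp' p hb₁
    have b₂eq := decomp' q hb₂
    have B₁eq := decomp' P hB₁
    have B₂eq := decomp' Q hB₂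
    set ψ := X * (p * q) with hψdef
    have hψ0 : constantCoeff ψ = 0 := by simp [hψdef]
    have h3 : h ^ 3 = pcomp ψ (X ^ 3) := h3_eq b₁eq b₂eq hcube
    refine ⟨g * pcomp G ψ, X * (p * pcomp P ψ), X * (q * pcomp Q ψ), ?_, ?_, ?_, ?_, ?_, ?_, ?_, ?_, ?_⟩
    · rw [map_mul, constantCoeff_pcomp]
      exact mul_ne_zero hg hG
    · simp
    · rw [coeff_one_X_mul, map_mul, constantCoeff_pcomp]
      exact mul_ne_zero hf₁1 hF₁1
    · simp
    · rw [coeff_one_X_mul, map_mul, constantCoeff_pcomp]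
      exact mul_ne_zero hf₂1 hF₂1
    · rw [gkey hh0 hψ0 h3, ← pcomp_mul hX3]
    · rw [pcomp_X hh0]; exact hu
    · rw [B₁eq, bkey hh0 hψ0 h3 P, pcomp_X_mul_X3, pcomp_mul hX3,
        show X ^ 2 * (v₁ * (h * pcomp (pcomp P ψ) (X ^ 3))) =
          X ^ 2 * (v₁ * h * pcomp (pcomp P ψ) (X ^ 3)) from by ring, hv₁, b₁eq]
      ring
    · rw [B₂eq, bkey hh0 hψ0 h3 Q, pcomp_X_mul_X3, pcomp_mul hX3,
        show X ^ 2 * (v₂ * (h * pcomp (pcomp Q ψ) (X ^ 3))) =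
          X ^ 2 * (v₂ * h * pcomp (pcomp Q ψ) (X ^ 3)) from by ring, hv₂, b₂eq]
      ring
  · -- inverses
    intro g f₁ f₂ hg hf₁0 hf₁1 hf₂0 hf₂1
    obtain ⟨p, rfl⟩ := X_dvd_iff.mpr hf₁0
    obtain ⟨q, rfl⟩ := X_dvd_iff.mpr hf₂0
    rw [coeff_one_X_mul] at hf₁1 hf₂1
    set ψ := X * (p * q) with hψdef
    have hψ0 : constantCoeff ψ = 0 := by simp [hψdef]
    have hψ1 : coeff 1 ψ ≠ 0 := by
      rw [hψdef, coeff_one_X_mul, map_mul]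
      exact mul_ne_zero hf₁1 hf₂1
    obtain ⟨χ, hχ0, hχ1, hχψ, hψχ⟩ := exists_pcomp_inv hψ0 hψ1
    have hq_ne : q ≠ 0 := fun hq => hf₂1 (by rw [hq]; simp)
    have hp_ne : p ≠ 0 := fun hp => hf₁1 (by rw [hp]; simp)
    -- f₁' = (X*q)∘χ = X * p₁ ,  f₂' = (X*p)∘χ = X * p₂
    have hc1 : constantCoeff (pcomp (X * q) χ) = 0 := by
      rw [constantCoeff_pcomp]; simp
    have hc2 : constantCoeff (pcomp (X * p) χ) = 0 := by
      rw [constantCoeff_pcomp]; simp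
    obtain ⟨p₁, hp₁⟩ := X_dvd_iff.mpr hc1
    obtain ⟨p₂, hp₂⟩ := X_dvd_iff.mpr hc2
    -- key identities
    have hP1 : p * pcomp p₁ ψ = 1 := by
      have e1 : pcomp (X * p₁) ψ = X * q := by
        rw [← hp₁, pcomp_assoc hχ0 hψ0, hχψ, pcomp_X_right]
      rw [pcomp_mul hψ0, pcomp_X hψ0] at e1
      apply mul_left_cancel₀ (mul_ne_zero (X_ne_zero : (X : PowerSeries K) ≠ 0) hq_ne)
      calc X * q * (p * pcomp p₁ ψ) = ψ * pcomp p₁ ψ := by rw [hψdef]; ring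
        _ = X * q := e1
        _ = X * q * 1 := (mul_one _).symm
    have hQ1 : q * pcomp p₂ ψ = 1 := by
      have e1 : pcomp (X * p₂) ψ = X * p := by
        rw [← hp₂, pcomp_assoc hχ0 hψ0, hχψ, pcomp_X_right]
      rw [pcomp_mul hψ0, pcomp_X hψ0] at e1
      apply mul_left_cancel₀ (mul_ne_zero (X_ne_zero : (X : PowerSeries K) ≠ 0) hp_ne)
      calc X * p * (q * pcomp p₂ ψ) = ψ * pcomp p₂ ψ := by rw [hψdef]; ring
        _ = X * p := e1
        _ = X * p * 1 := (mul_one _).symm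
    refine ⟨pcomp g⁻¹ χ, pcomp (X * q) χ, pcomp (X * p) χ, ?_, ?_, ?_, ?_, ?_, ?_, ?_⟩
    · rw [constantCoeff_pcomp, PowerSeries.constantCoeff_inv]
      exact inv_ne_zero hg
    · exact hc1
    · rw [coeff_one_pcomp hχ0, coeff_one_X_mul]
      exact mul_ne_zero hf₂1 hχ1
    · exact hc2
    · rw [coeff_one_pcomp hχ0, coeff_one_X_mul]
      exact mul_ne_zero hf₁1 hχ1
    · -- forward identity
      intro b₁ b₂ b₁' b₂' h u v₁ v₂ hb₁ hb₂ hb₁' hb₂' hh0 hh1 hcube hu hv₁ hv₂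
      have b₁eq := decomp' p hb₁
      have b₂eq := decomp' q hb₂
      rw [hp₁] at hb₁'
      rw [hp₂] at hb₂'
      have b₁'eq := decomp' p₁ hb₁'
      have b₂'eq := decomp' p₂ hb₂'
      have h3 : h ^ 3 = pcomp ψ (X ^ 3) := h3_eq b₁eq b₂eq hcube
      refine ⟨?_, ?_, ?_, ?_⟩
      · rw [gkey hh0 hψ0 h3, pcomp_assoc hχ0 hψ0, hχψ, pcomp_X_right,
          ← pcomp_mul hX3, PowerSeries.mul_inv_cancel g hg, pcomp_one]
      · rw [pcomp_X hh0]; exact hu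
      · rw [b₁'eq, bkey hh0 hψ0 h3 p₁,
          show v₁ * (h * pcomp (pcomp p₁ ψ) (X ^ 3)) =
            v₁ * h * pcomp (pcomp p₁ ψ) (X ^ 3) from by ring, hv₁, b₁eq,
          mul_assoc, ← pcomp_mul hX3, hP1, pcomp_one, mul_one]
      · rw [b₂'eq, bkey hh0 hψ0 h3 p₂,
          show v₂ * (h * pcomp (pcomp p₂ ψ) (X ^ 3)) =
            v₂ * h * pcomp (pcomp p₂ ψ) (X ^ 3) from by ring, hv₂, b₂eq,
          mul_assoc, ← pcomp_mul hX3, hQ1, pcomp_one, mul_one]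
    · -- reverse identity
      intro b₁ b₂ b₁' b₂' h u v₁ v₂ hb₁ hb₂ hb₁' hb₂' hh0 hh1 hcube hu hv₁ hv₂
      have b₁eq := decomp' p hb₁
      have b₂eq := decomp' q hb₂
      rw [hp₁] at hb₁'
      rw [hp₂] at hb₂'
      have b₁'eq := decomp' p₁ hb₁'
      have b₂'eq := decomp' p₂ hb₂'
      have hψ' : X * (p₁ * p₂) = χ := by
        apply pcomp_right_inj hψ0 hψ1
        rw [hχψ, pcomp_mul hψ0, pcomp_mul hψ0, pcomp_X hψ0,
          show ψ * (pcomp p₁ ψ * pcomp p₂ ψ) =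
            X * ((p * pcomp p₁ ψ) * (q * pcomp p₂ ψ)) from by rw [hψdef]; ring,
          hP1, hQ1]
        ring
      have h3' : h ^ 3 = pcomp χ (X ^ 3) := by
        rw [← hψ']; exact h3_eq b₁'eq b₂'eq hcube
      have hP1' : p₁ * pcomp p χ = 1 := by
        apply pcomp_right_inj hψ0 hψ1
        rw [pcomp_mul hψ0, pcomp_assoc hχ0 hψ0, hχψ, pcomp_X_right, pcomp_one,
          mul_comm]
        exact hP1
      have hQ1' : p₂ * pcomp q χ = 1 := by
        apply pcomp_right_inj hψ0 hψ1
        rw [pcomp_mul hψ0, pcomp_assoc hχ0 hψ0, hχψ, pcomp_X_right, pcomp_one,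
          mul_comm]
        exact hQ1
      refine ⟨?_, ?_, ?_, ?_⟩
      · rw [gkey hh0 hχ0 h3' g, ← pcomp_mul hX3, ← pcomp_mul hχ0,
          show g⁻¹ * g = 1 from by rw [mul_comm]; exact PowerSeries.mul_inv_cancel g hg,
          pcomp_one, pcomp_one]
      · rw [pcomp_X hh0]; exact hu
      · rw [b₁eq, bkey hh0 hχ0 h3' p,
          show v₁ * (h * pcomp (pcomp p χ) (X ^ 3)) =
            v₁ * h * pcomp (pcomp p χ) (X ^ 3) from by ring, hv₁, b₁'eq,
          mul_assoc, ← pcomp_mul hX3, hP1', pcomp_one, mul_one]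
      · rw [b₂eq, bkey hh0 hχ0 h3' q,
          show v₂ * (h * pcomp (pcomp q χ) (X ^ 3)) =
            v₂ * h * pcomp (pcomp q χ) (X ^ 3) from by ring, hv₂, b₂'eq,
          mul_assoc, ← pcomp_mul hX3, hQ1', pcomp_one, mul_one]
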